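/- Let M be a MAGNN and let r : ∃P_1.⊤ ⊓ … ⊓ ∃P_j.⊤ ⊓ A_1 ⊓ … ⊓ A_k ⊑ A_{k+1} be a rule with P_1,…,P_j binary predicates, A_1,…,A_{k+1} unary predicates, and j + k ≥ 1. Define D_base := { A_1(a),…,A_k(a), P_1(a,b),…,P_j(a,b) } for two distinct constants a ≠ b. Then r is sound for M if and only if A_{k+1}(a) ∈ T_M(D_base). -/
import Mathlib


open scoped BigOperators

namespace KG

/-- A fact over a signature with `δ` unary predicates (indexed by `Fin δ`) and
binary predicates indexed by `Col`; constants are natural numbers. -/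
inductive Fact (δ : ℕ) (Col : Type) where
  | unary : Fin δ → ℕ → Fact δ Col
  | binary : Col → ℕ → ℕ → Fact δ Col
deriving DecidableEq

/-- A dataset is a finite set of facts. -/
abbrev Dataset (δ : ℕ) (Col : Type) [DecidableEq Col] := Finset (Fact δ Col)

variable {δ : ℕ} {Col : Type} [DecidableEq Col] [Fintype Col]

/-- The (finite) set of constants occurring in a dataset. -/
def conD (D : Dataset δ Col) : Finset ℕ :=
  D.biUnion fun f =>
    match f with
    | .unary _ a => {a}
    | .binary _ a b => {a, b}

/-- The `P`-successors of `a` in `D`. -/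
def nbrs (D : Dataset δ Col) (P : Col) (a : ℕ) : Finset ℕ :=
  (conD D).filter fun d => Fact.binary P a d ∈ D

/-- A mean-aggregation GNN with `L ≥ 1` layers, over the signature with `δ` unary
predicates and binary predicates `Col`.  `dims ℓ` is the dimension of the layer-`ℓ`
vectors, with `dims 0 = dims L = δ`; `A ℓ` and `B P ℓ` are the matrices and `bias ℓ`
the bias vector used to compute the layer-`(ℓ+1)` vectors; `act ℓ` is the
(monotonically increasing, continuous, non-negatively valued) activation function
applied there, and `t` is the classification threshold. -/
structure GNN (δ : ℕ) (Col : Type) where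
  L : ℕ
  hL : 1 ≤ L
  dims : ℕ → ℕ
  dims0 : dims 0 = δ
  dimsL : dims L = δ
  A : (ℓ : ℕ) → Matrix (Fin (dims (ℓ + 1))) (Fin (dims ℓ)) ℝ
  B : Col → (ℓ : ℕ) → Matrix (Fin (dims (ℓ + 1))) (Fin (dims ℓ)) ℝ
  bias : (ℓ : ℕ) → Fin (dims (ℓ + 1)) → ℝ
  act : ℕ → ℝ → ℝ
  act_mono : ∀ ℓ, Monotone (act ℓ)
  act_cont : ∀ ℓ, Continuous (act ℓ)
  act_nonneg : ∀ ℓ x, 0 ≤ act ℓ x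
  t : ℝ

/-- The layer-`ℓ` vector that the GNN `M` assigns to the constant `a` on input
dataset `D`.  The mean of an empty family is the zero vector (`0 / 0 = 0` in `ℝ`). -/
noncomputable def GNN.val (M : GNN δ Col) (D : Dataset δ Col) :
    (ℓ : ℕ) → ℕ → Fin (M.dims ℓ) → ℝ
  | 0, a, i => if Fact.unary (Fin.cast M.dims0 i) a ∈ D then (1 : ℝ) else 0
  | ℓ + 1, a, i =>
      M.act ℓ (M.bias ℓ i
        + (M.A ℓ).mulVec (fun j => M.val D ℓ a j) i
        + ∑ P : Col, (M.B P ℓ).mulVec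
            (fun j => (∑ d ∈ nbrs D P a, M.val D ℓ d j) / ((nbrs D P a).card : ℝ)) i)

/-- The dataset transformation induced by the GNN `M`:
`T_M(D) = { Uᵢ(a) : a ∈ con(D), v^a_L[i] ≥ t }`. -/
def GNN.T (M : GNN δ Col) (D : Dataset δ Col) : Set (Fact δ Col) :=
  { f | ∃ (A : Fin δ) (a : ℕ), f = Fact.unary A a ∧ a ∈ conD D ∧
      M.t ≤ M.val D M.L a (Fin.cast M.dimsL.symm A) }

/-- A GNN is monotonic (is a MAGNN) if all matrix entries are non-negative. -/
def GNN.Monotonic (M : GNN δ Col) : Prop :=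
  (∀ ℓ i j, 0 ≤ M.A ℓ i j) ∧ (∀ P ℓ i j, 0 ≤ M.B P ℓ i j)

/-- Concepts in the syntax `C ::= ⊤ | A | C ⊓ C' | C ⊔ C' | ≥ₙ P.C`
(`∃P.C` is `≥₁ P.C`); ELUQ concepts are those in which every `≥ₙ` has `n ≥ 1`. -/
inductive Concept (δ : ℕ) (Col : Type) where
  | top : Concept δ Col
  | atom : Fin δ → Concept δ Col
  | and : Concept δ Col → Concept δ Col → Concept δ Col
  | or : Concept δ Col → Concept δ Col → Concept δ Col
  | atLeast : ℕ → Col → Concept δ Col → Concept δ Col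
deriving DecidableEq

/-- A concept is a (well-formed) ELUQ concept when every `≥ₙ` has `n` a positive integer. -/
inductive ELUQ : Concept δ Col → Prop
  | top : ELUQ .top
  | atom (A : Fin δ) : ELUQ (.atom A)
  | and {C₁ C₂} : ELUQ C₁ → ELUQ C₂ → ELUQ (.and C₁ C₂)
  | or {C₁ C₂} : ELUQ C₁ → ELUQ C₂ → ELUQ (.or C₁ C₂)
  | atLeast {C} (n : ℕ) (P : Col) (hn : 1 ≤ n) : ELUQ C → ELUQ (.atLeast n P C)

/-- Satisfaction of a concept by a constant over a dataset. -/
def sat (D : Dataset δ Col) : ℕ → Concept δ Col → Prop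
  | _, .top => True
  | c, .atom A => Fact.unary A c ∈ D
  | c, .and C₁ C₂ => sat D c C₁ ∧ sat D c C₂
  | c, .or C₁ C₂ => sat D c C₁ ∨ sat D c C₂
  | c, .atLeast n P C =>
      ∃ S : Finset ℕ, S.card = n ∧ ∀ d ∈ S, Fact.binary P c d ∈ D ∧ sat D d C

/-- A rule `C ⊑ A`. -/
structure Rule (δ : ℕ) (Col : Type) where
  body : Concept δ Col
  head : Fin δ
deriving DecidableEq

/-- Immediate consequences of a rule on a dataset. -/
def Rule.T (r : Rule δ Col) (D : Dataset δ Col) : Set (Fact δ Col) :=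
  { f | ∃ a : ℕ, f = Fact.unary r.head a ∧ a ∈ conD D ∧ sat D a r.body }

/-- A rule is sound for a GNN if its consequences are always among the GNN's. -/
def Sound (r : Rule δ Col) (M : GNN δ Col) : Prop :=
  ∀ D : Dataset δ Col, r.T D ⊆ M.T D


/-- Conjunction of a list of concepts, ending in `⊤`. -/
def bigAndC : List (Concept δ Col) → Concept δ Col
  | [] => .top
  | C :: rest => .and C (bigAndC rest)

/-- The body `∃P₁.⊤ ⊓ … ⊓ ∃Pⱼ.⊤ ⊓ A₁ ⊓ … ⊓ A_k ⊓ ⊤` determined by a list of binary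
predicates `Ps = [P₁,…,Pⱼ]` and a list of unary predicates `As = [A₁,…,A_k]`. -/
def simpleBody (Ps : List Col) (As : List (Fin δ)) : Concept δ Col :=
  bigAndC (Ps.map (fun P => Concept.atLeast 1 P Concept.top) ++ As.map Concept.atom)

/-- The dataset `D_base = { A₁(a),…,A_k(a), P₁(a,b),…,Pⱼ(a,b) }`. -/
def Dbase (Ps : List Col) (As : List (Fin δ)) (a b : ℕ) : Dataset δ Col :=
  (As.map fun A => Fact.unary A a).toFinset ∪ (Ps.map fun P => Fact.binary P a b).toFinset

section Aux

lemma val_nonneg (M : GNN δ Col) (D : Dataset δ Col) (ℓ : ℕ) (a : ℕ)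
    (i : Fin (M.dims ℓ)) : 0 ≤ M.val D ℓ a i := by
  cases ℓ with
  | zero =>
      show (0:ℝ) ≤ if Fact.unary (Fin.cast M.dims0 i) a ∈ D then (1:ℝ) else 0
      split <;> norm_num
  | succ ℓ => exact M.act_nonneg ℓ _

lemma mulVec_mono {m n : ℕ} (A : Matrix (Fin m) (Fin n) ℝ) (hA : ∀ i j, 0 ≤ A i j)
    {u v : Fin n → ℝ} (huv : ∀ j, u j ≤ v j) (i : Fin m) :
    A.mulVec u i ≤ A.mulVec v i := by
  unfold Matrix.mulVec dotProduct
  exact Finset.sum_le_sum fun j _ => mul_le_mul_of_nonneg_left (huv j) (hA i j)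

lemma mean_nonneg (M : GNN δ Col) (D : Dataset δ Col) (ℓ : ℕ) (P : Col) (a : ℕ)
    (j : Fin (M.dims ℓ)) :
    0 ≤ (∑ d ∈ nbrs D P a, M.val D ℓ d j) / ((nbrs D P a).card : ℝ) :=
  div_nonneg (Finset.sum_nonneg fun d _ => val_nonneg M D ℓ d j) (by positivity)

lemma mem_conD_unary {D : Dataset δ Col} {A : Fin δ} {x : ℕ}
    (h : Fact.unary A x ∈ D) : x ∈ conD D :=
  Finset.mem_biUnion.mpr ⟨_, h, by simp⟩

lemma mem_conD_binary_left {D : Dataset δ Col} {P : Col} {x y : ℕ}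
    (h : Fact.binary P x y ∈ D) : x ∈ conD D :=
  Finset.mem_biUnion.mpr ⟨_, h, by simp⟩

lemma mem_conD_binary_right {D : Dataset δ Col} {P : Col} {x y : ℕ}
    (h : Fact.binary P x y ∈ D) : y ∈ conD D :=
  Finset.mem_biUnion.mpr ⟨_, h, by simp⟩

/-- If `x` has no unary facts and no outgoing edges in `D`, then its vectors are
componentwise below those of any constant in any dataset. -/
lemma bot_le (M : GNN δ Col) (hM : M.Monotonic) (D D' : Dataset δ Col) (x e : ℕ)
    (hx0 : ∀ i : Fin δ, Fact.unary i x ∉ D) (hxn : ∀ P, nbrs D P x = ∅) :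
    ∀ ℓ (i : Fin (M.dims ℓ)), M.val D ℓ x i ≤ M.val D' ℓ e i := by
  intro ℓ
  induction ℓ with
  | zero =>
      intro i
      show (if Fact.unary (Fin.cast M.dims0 i) x ∈ D then (1:ℝ) else 0) ≤ _
      rw [if_neg (hx0 _)]
      exact val_nonneg M D' 0 e i
  | succ ℓ ih =>
      intro i
      apply M.act_mono
      refine add_le_add (add_le_add le_rfl (mulVec_mono _ (hM.1 ℓ) ih i)) ?_
      refine Finset.sum_le_sum fun P _ => mulVec_mono _ (hM.2 P ℓ) (fun j => ?_) i
      rw [hxn P]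
      simpa using mean_nonneg M D' ℓ P e j

lemma mem_Dbase {Ps : List Col} {As : List (Fin δ)} {a b : ℕ} {f : Fact δ Col} :
    f ∈ Dbase Ps As a b ↔
      (∃ A ∈ As, f = Fact.unary A a) ∨ ∃ P ∈ Ps, f = Fact.binary P a b := by
  simp [Dbase, eq_comm]

lemma nbrs_Dbase_mem {Ps : List Col} {As : List (Fin δ)} {a b : ℕ} (hab : a ≠ b)
    {P : Col} (hP : P ∈ Ps) : nbrs (Dbase Ps As a b) P a = {b} := by
  ext d
  simp only [nbrs, Finset.mem_filter, Finset.mem_singleton]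
  constructor
  · rintro ⟨-, hd⟩
    rcases mem_Dbase.mp hd with ⟨A, -, h⟩ | ⟨P', -, h⟩
    · exact absurd h (by simp)
    · simp only [Fact.binary.injEq] at h
      exact h.2.2
  · intro hd
    have hb : Fact.binary P a b ∈ Dbase Ps As a b := mem_Dbase.mpr (Or.inr ⟨P, hP, rfl⟩)
    rw [hd]
    exact ⟨mem_conD_binary_right hb, hb⟩

lemma nbrs_Dbase_notMem {Ps : List Col} {As : List (Fin δ)} {a b : ℕ}
    {P : Col} (hP : P ∉ Ps) : nbrs (Dbase Ps As a b) P a = ∅ := by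
  ext d
  simp only [nbrs, Finset.mem_filter, Finset.notMem_empty, iff_false, not_and]
  intro _ hd
  rcases mem_Dbase.mp hd with ⟨A, -, h⟩ | ⟨P', hP', h⟩
  · exact absurd h (by simp)
  · injection h with h1; exact hP (h1 ▸ hP')

lemma b_no_unary {Ps : List Col} {As : List (Fin δ)} {a b : ℕ} (hab : a ≠ b)
    (i : Fin δ) : Fact.unary i b ∉ Dbase Ps As a b := by
  intro h
  rcases mem_Dbase.mp h with ⟨A, -, h⟩ | ⟨P, -, h⟩
  · injection h with _ h2; exact hab h2.symm
  · exact absurd h (by simp)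

lemma b_no_nbrs {Ps : List Col} {As : List (Fin δ)} {a b : ℕ} (hab : a ≠ b)
    (P : Col) : nbrs (Dbase Ps As a b) P b = ∅ := by
  ext d
  simp only [nbrs, Finset.mem_filter, Finset.notMem_empty, iff_false, not_and]
  intro _ hd
  rcases mem_Dbase.mp hd with ⟨A, -, h⟩ | ⟨P', -, h⟩
  · exact absurd h (by simp)
  · injection h with _ h2; exact hab h2.symm

/-- The key monotonicity lemma. -/
lemma dbase_le (M : GNN δ Col) (hM : M.Monotonic) (Ps : List Col) (As : List (Fin δ))
    (a b : ℕ) (hab : a ≠ b) (D : Dataset δ Col) (c : ℕ)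
    (hA : ∀ A ∈ As, Fact.unary A c ∈ D)
    (hP : ∀ P ∈ Ps, (nbrs D P c).Nonempty) :
    ∀ ℓ (i : Fin (M.dims ℓ)), M.val (Dbase Ps As a b) ℓ a i ≤ M.val D ℓ c i := by
  intro ℓ
  induction ℓ with
  | zero =>
      intro i
      show (if Fact.unary (Fin.cast M.dims0 i) a ∈ Dbase Ps As a b then (1:ℝ) else 0)
        ≤ (if Fact.unary (Fin.cast M.dims0 i) c ∈ D then (1:ℝ) else 0)
      by_cases h : Fact.unary (Fin.cast M.dims0 i) a ∈ Dbase Ps As a b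
      · rcases mem_Dbase.mp h with ⟨A, hAmem, hEq⟩ | ⟨P, -, hEq⟩
        · injection hEq with h1
          rw [if_pos h, if_pos (h1 ▸ hA A hAmem)]
        · exact absurd hEq (by simp)
      · rw [if_neg h]; split <;> norm_num
  | succ ℓ ih =>
      intro i
      apply M.act_mono
      refine add_le_add (add_le_add le_rfl (mulVec_mono _ (hM.1 ℓ) ih i)) ?_
      refine Finset.sum_le_sum fun P _ => mulVec_mono _ (hM.2 P ℓ) (fun j => ?_) i
      by_cases hPin : P ∈ Ps
      · rw [nbrs_Dbase_mem hab hPin]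
        simp only [Finset.sum_singleton, Finset.card_singleton, Nat.cast_one, div_one]
        have hb : ∀ d ∈ nbrs D P c,
            M.val (Dbase Ps As a b) ℓ b j ≤ M.val D ℓ d j := fun d _ =>
          bot_le M hM (Dbase Ps As a b) D b d (b_no_unary hab) (b_no_nbrs hab) ℓ j
        have hcard : (0:ℝ) < ((nbrs D P c).card : ℝ) := by
          exact_mod_cast Finset.card_pos.mpr (hP P hPin)
        rw [le_div_iff₀ hcard]
        calc M.val (Dbase Ps As a b) ℓ b j * ((nbrs D P c).card : ℝ)
            = ∑ _d ∈ nbrs D P c, M.val (Dbase Ps As a b) ℓ b j := by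
              rw [Finset.sum_const, nsmul_eq_mul, mul_comm]
          _ ≤ ∑ d ∈ nbrs D P c, M.val D ℓ d j := Finset.sum_le_sum hb
      · rw [nbrs_Dbase_notMem hPin]
        simpa using mean_nonneg M D ℓ P c j

lemma sat_bigAndC {D : Dataset δ Col} {c : ℕ} {L : List (Concept δ Col)} :
    sat D c (bigAndC L) ↔ ∀ C ∈ L, sat D c C := by
  induction L with
  | nil => simp [bigAndC, sat]
  | cons C rest ih => simp [bigAndC, sat, ih]

end Aux

/-- For a MAGNN `M` and a rule
`r : ∃P₁.⊤ ⊓ … ⊓ ∃Pⱼ.⊤ ⊓ A₁ ⊓ … ⊓ A_k ⊑ A_{k+1}` with `j + k ≥ 1`,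
`r` is sound for `M` iff `A_{k+1}(a) ∈ T_M(D_base)`, where
`D_base = { A₁(a),…,A_k(a), P₁(a,b),…,Pⱼ(a,b) }` for distinct constants `a ≠ b`. -/
theorem monotonic_rule_soundness_check (M : GNN δ Col) (hM : M.Monotonic)
    (Ps : List Col) (As : List (Fin δ)) (Ahead : Fin δ)
    (hjk : 1 ≤ Ps.length + As.length) (a b : ℕ) (hab : a ≠ b) :
    Sound ⟨simpleBody Ps As, Ahead⟩ M ↔
      Fact.unary Ahead a ∈ M.T (Dbase Ps As a b) := by
  constructor
  · intro hs
    have haCon : a ∈ conD (Dbase Ps As a b) := by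
      rcases Ps with _ | ⟨P, Ps'⟩
      · rcases As with _ | ⟨A, As'⟩
        · simp at hjk
        · exact mem_conD_unary (mem_Dbase.mpr (Or.inl ⟨A, by simp, rfl⟩))
      · exact mem_conD_binary_left (mem_Dbase.mpr (Or.inr ⟨P, by simp, rfl⟩))
    have hsat : sat (Dbase Ps As a b) a (simpleBody Ps As) := by
      rw [simpleBody, sat_bigAndC]
      intro C hC
      rcases List.mem_append.mp hC with hC | hC
      · rcases List.mem_map.mp hC with ⟨P, hP, rfl⟩
        refine ⟨{b}, Finset.card_singleton b, fun d hd => ?_⟩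
        rw [Finset.mem_singleton] at hd
        subst hd
        exact ⟨mem_Dbase.mpr (Or.inr ⟨P, hP, rfl⟩), trivial⟩
      · rcases List.mem_map.mp hC with ⟨A, hA, rfl⟩
        exact mem_Dbase.mpr (Or.inl ⟨A, hA, rfl⟩)
    exact hs (Dbase Ps As a b) ⟨a, rfl, haCon, hsat⟩
  · rintro ⟨A', a', hEq, haCon, hval⟩ D f hf
    obtain ⟨c, rfl, hcCon, hsat⟩ := hf
    injection hEq with h1 h2
    subst h1
    subst h2
    rw [simpleBody, sat_bigAndC] at hsat
    have hA : ∀ A ∈ As, Fact.unary A c ∈ D := fun A hAm =>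
      hsat (Concept.atom A) (List.mem_append.mpr (Or.inr (List.mem_map.mpr ⟨A, hAm, rfl⟩)))
    have hP : ∀ P ∈ Ps, (nbrs D P c).Nonempty := by
      intro P hPm
      obtain ⟨S, hcard, hS⟩ := hsat (Concept.atLeast 1 P Concept.top)
        (List.mem_append.mpr (Or.inl (List.mem_map.mpr ⟨P, hPm, rfl⟩)))
      obtain ⟨d, hd⟩ := Finset.card_pos.mp (by rw [hcard]; norm_num)
      exact ⟨d, Finset.mem_filter.mpr ⟨mem_conD_binary_right (hS d hd).1, (hS d hd).1⟩⟩
    exact ⟨Ahead, c, rfl, hcCon,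
      le_trans hval (dbase_le M hM Ps As a b hab D c hA hP M.L _)⟩

end KG
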